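/- arXiv:2508.18555 — 8 statements merged into one kernel-verified Lean document; each statement's English description precedes it below -/
import Mathlib

section
/- Let k ≥ 2 be an integer and G a simple graph with β := β^k(G) > 0. Then the minimum degree satisfies δ(G) ≥ (β + 1)k − 1. -/
open Finset
open scoped Classical

variable {V : Type*}

/-- The k-th neighborhood: vertices adjacent to at least `k` vertices of `S`. -/
noncomputable def kNbhd [Fintype V] (G : SimpleGraph V) (k : ℕ) (S : Finset V) : Finset V :=
  Finset.univ.filter fun v => k ≤ (S.filter fun u => G.Adj v u).card

/-- The k-th binding number. -/
noncomputable def bindingNum [Fintype V] (G : SimpleGraph V) (k : ℕ) : ℝ :=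
  if h : (Finset.univ.filter fun S : Finset V =>
      k ≤ S.card ∧ kNbhd G k S ≠ Finset.univ).Nonempty then
    (Finset.univ.filter fun S : Finset V =>
      k ≤ S.card ∧ kNbhd G k S ≠ Finset.univ).inf' h
      fun S => ((kNbhd G k S).card : ℝ) / (S.card : ℝ)
  else 0

/-!
Take `v` and a `k`-set `S ∋ v` containing as many neighbours of `v` as possible. A vertex with
`k` neighbours in `S` is adjacent to all of `S`, so `Λᵏ(S) ⊆ N(v) \ S`, which misses `v` and has
`deg v - (k - 1)` elements. Hence `β k ≤ deg v - (k - 1)`, and `β > 0` rules out `deg v < k - 1`.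
-/

theorem Finset.exists_card_eq_mem_card_sdiff [Fintype V] {N : Finset V} {v : V} (hv : v ∉ N)
    {k : ℕ} (hk : 0 < k) (hkV : k ≤ Fintype.card V) :
    ∃ S : Finset V, S.card = k ∧ v ∈ S ∧ (N \ S).card = N.card - (k - 1) := by
  by_cases hkN : k - 1 ≤ N.card
  · obtain ⟨A, hAN, hA⟩ := exists_subset_card_eq hkN
    have hvA : v ∉ A := fun h => hv (hAN h)
    refine ⟨insert v A, by rw [card_insert_of_notMem hvA, hA]; omega, mem_insert_self v A, ?_⟩
    rw [sdiff_insert_of_notMem hv, card_sdiff_of_subset hAN, hA]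
  · have hvN : (insert v N).card ≤ k := by rw [card_insert_of_notMem hv]; omega
    obtain ⟨S, hNS, hS⟩ := exists_superset_card_eq hvN hkV
    refine ⟨S, hS, hNS (mem_insert_self v N), ?_⟩
    rw [sdiff_eq_empty_iff_subset.mpr ((subset_insert v N).trans hNS), card_empty]
    omega

section BindingNumber

variable [Fintype V] {G : SimpleGraph V} {k : ℕ} {S : Finset V}

theorem kNbhd_zero (G : SimpleGraph V) (S : Finset V) : kNbhd G 0 S = univ := by
  simp [kNbhd]

theorem mem_kNbhd_iff_subset_neighborFinset (hS : S.card = k) {u : V} :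
    u ∈ kNbhd G k S ↔ S ⊆ G.neighborFinset u := by
  simp only [kNbhd, mem_filter, mem_univ, true_and, ← hS]
  constructor
  · intro h w hw
    rw [← eq_of_subset_of_card_le (filter_subset _ S) h] at hw
    simpa using (mem_filter.mp hw).2
  · intro h
    rw [filter_true_of_mem fun w hw => (G.mem_neighborFinset u w).mp (h hw)]

theorem kNbhd_subset_neighborFinset_sdiff (hS : S.card = k) {v : V} (hv : v ∈ S) :
    kNbhd G k S ⊆ G.neighborFinset v \ S := by
  intro u hu
  have hSu := (mem_kNbhd_iff_subset_neighborFinset hS).mp hu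
  refine mem_sdiff.mpr ⟨?_, fun huS => G.notMem_neighborFinset_self u (hSu huS)⟩
  exact (G.mem_neighborFinset v u).mpr ((G.mem_neighborFinset u v).mp (hSu hv)).symm

theorem bindingNum_le_div (hkS : k ≤ S.card) (hS : kNbhd G k S ≠ univ) :
    bindingNum G k ≤ (kNbhd G k S).card / S.card := by
  have hmem : S ∈ univ.filter fun S : Finset V => k ≤ S.card ∧ kNbhd G k S ≠ univ := by
    simp [hkS, hS]
  rw [bindingNum, dif_pos ⟨S, hmem⟩]
  exact inf'_le _ hmem

theorem exists_kNbhd_ne_univ_of_bindingNum_pos (hβ : 0 < bindingNum G k) :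
    ∃ S : Finset V, k ≤ S.card ∧ kNbhd G k S ≠ univ := by
  by_contra h
  rw [bindingNum, dif_neg fun ⟨S, hS⟩ => h ⟨S, (mem_filter.mp hS).2⟩] at hβ
  exact hβ.false

theorem pos_of_bindingNum_pos (hβ : 0 < bindingNum G k) : 0 < k := by
  obtain ⟨S, -, hS⟩ := exists_kNbhd_ne_univ_of_bindingNum_pos hβ
  refine Nat.pos_of_ne_zero fun hk => hS ?_
  rw [hk, kNbhd_zero]

theorem le_card_of_bindingNum_pos (hβ : 0 < bindingNum G k) : k ≤ Fintype.card V := by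
  obtain ⟨S, hkS, -⟩ := exists_kNbhd_ne_univ_of_bindingNum_pos hβ
  exact hkS.trans (card_le_univ S)

theorem bindingNum_mul_le_card_neighborFinset_sdiff (hS : S.card = k) {v : V} (hv : v ∈ S) :
    bindingNum G k * k ≤ (G.neighborFinset v \ S).card := by
  have hk : (0 : ℝ) < k := by
    rw [← hS]; exact_mod_cast card_pos.mpr ⟨v, hv⟩
  have hsub := kNbhd_subset_neighborFinset_sdiff (G := G) hS hv
  have hne : kNbhd G k S ≠ univ := fun h =>
    (mem_sdiff.mp (hsub (h ▸ mem_univ v))).2 hv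
  rw [← le_div_iff₀ hk]
  calc bindingNum G k ≤ (kNbhd G k S).card / S.card := bindingNum_le_div hS.ge hne
    _ ≤ (G.neighborFinset v \ S).card / k := by
      rw [hS]; gcongr

end BindingNumber

theorem stmt_4_general [Fintype V] (k : ℕ) (G : SimpleGraph V)
    (hβ : 0 < bindingNum G k) :
    ∀ v : V, (bindingNum G k + 1) * k - 1 ≤ ((G.neighborSet v).ncard : ℝ) := by
  intro v
  have hk := pos_of_bindingNum_pos hβ
  obtain ⟨S, hS, hvS, hcard⟩ := exists_card_eq_mem_card_sdiff (G.notMem_neighborFinset_self v)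
    hk (le_card_of_bindingNum_pos hβ)
  have key := bindingNum_mul_le_card_neighborFinset_sdiff (G := G) hS hvS
  rw [hcard, G.card_neighborFinset_eq_degree] at key
  have hdeg : k - 1 ≤ G.degree v := by
    by_contra h
    rw [Nat.sub_eq_zero_of_le (by omega), Nat.cast_zero] at key
    have : (0 : ℝ) < k := by exact_mod_cast hk
    nlinarith
  rw [Set.ncard_eq_toFinset_card', ← G.neighborFinset_def, G.card_neighborFinset_eq_degree]
  push_cast [hdeg, Nat.one_le_of_lt hk] at key ⊢
  linarith

theorem stmt_4 [Fintype V] (k : ℕ) (hk : 2 ≤ k) (G : SimpleGraph V)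
    (hβ : 0 < bindingNum G k) :
    ∀ v : V, (bindingNum G k + 1) * k - 1 ≤ ((G.neighborSet v).ncard : ℝ) :=
  stmt_4_general k G hβ
end

section
/- Let k ≥ 2 be an integer and G a simple graph on n vertices with β := β^k(G) ≥ 1. Then δ(G) ≥ n − (n − 1)/β. -/
open Finset
open scoped Classical

variable {V : Type*}

/-!
Let `T` be the set of non-neighbours of `v` (so `v ∈ T` and `|T| = n - deg v`), and enlarge `T` to a
set `S` with `|S| = max(|T|, k)`. The neighbours of `v` in `S` lie in `S \ T`, which has fewer
than `k` elements, so `v ∉ Λ^k(S)`. Hence `S` is admissible in the definition of `β`, and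
`β |S| ≤ |Λ^k(S)| ≤ n - 1`, so `β (n - deg v) ≤ n - 1`. Since `bindingNum` is `0` when
no set is admissible, `β ≥ 1` provides an admissible set, whence `1 ≤ k ≤ n` (as `Λ^0(S) = V`).
-/

namespace SimpleGraph

variable [Fintype V] (G : SimpleGraph V)

lemma kNbhd_zero (S : Finset V) : kNbhd G 0 S = univ := by
  simp [kNbhd]

lemma ne_zero_of_kNbhd_ne_univ {k : ℕ} {S : Finset V} (hS : kNbhd G k S ≠ univ) : k ≠ 0 := by
  rintro rfl
  exact hS (kNbhd_zero G S)

lemma exists_kNbhd_ne_univ_of_bindingNum_ne_zero {k : ℕ} (h : bindingNum G k ≠ 0) :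
    ∃ S : Finset V, k ≤ #S ∧ kNbhd G k S ≠ univ := by
  by_contra hS
  refine h (dif_neg ?_)
  simpa [Finset.Nonempty] using hS

lemma bindingNum_mul_card_le {k : ℕ} {S : Finset V} (hkS : k ≤ #S) (hS : kNbhd G k S ≠ univ) :
    bindingNum G k * #S ≤ Fintype.card V - 1 := by
  have hmem : S ∈ univ.filter fun S : Finset V => k ≤ #S ∧ kNbhd G k S ≠ univ := by simp [hkS, hS]
  have hβ : bindingNum G k ≤ #(kNbhd G k S) / #S := by
    rw [bindingNum, dif_pos ⟨S, hmem⟩]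
    exact inf'_le _ hmem
  have hN : #(kNbhd G k S) < Fintype.card V := card_lt_card (ssubset_univ_iff.mpr hS)
  have hSpos : (0 : ℝ) < #S := by
    exact_mod_cast (Nat.pos_of_ne_zero (G.ne_zero_of_kNbhd_ne_univ hS)).trans_le hkS
  have hN' : (#(kNbhd G k S) : ℝ) ≤ Fintype.card V - 1 := by
    rw [le_sub_iff_add_le]; exact_mod_cast hN
  calc bindingNum G k * #S ≤ #(kNbhd G k S) := (le_div_iff₀ hSpos).mp hβ
    _ ≤ Fintype.card V - 1 := hN'

lemma notMem_kNbhd_of_compl_neighborFinset_subset {k : ℕ} {S : Finset V} (v : V)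
    (hT : (G.neighborFinset v)ᶜ ⊆ S) (hS : #S < #(G.neighborFinset v)ᶜ + k) :
    v ∉ kNbhd G k S := by
  intro hv
  have hsub : (S.filter fun u => G.Adj v u) ⊆ S \ (G.neighborFinset v)ᶜ := by
    intro u hu
    simp_all
  have hcard := card_le_card hsub
  rw [card_sdiff_of_subset hT] at hcard
  have hTS := card_le_card hT
  simp only [kNbhd, mem_filter] at hv
  omega

lemma exists_notMem_kNbhd {k : ℕ} (v : V) (hk : k ≠ 0) (hkV : k ≤ Fintype.card V) :
    ∃ S : Finset V, k ≤ #S ∧ #(G.neighborFinset v)ᶜ ≤ #S ∧ v ∉ kNbhd G k S := by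
  have hT : 0 < #(G.neighborFinset v)ᶜ := card_pos.mpr ⟨v, by simp⟩
  obtain ⟨S, hTS, -, hS⟩ := exists_subsuperset_card_eq (subset_univ (G.neighborFinset v)ᶜ)
    (le_max_left _ k) (max_le (card_le_univ _) (by rwa [card_univ]))
  refine ⟨S, hS ▸ le_max_right _ _, hS ▸ le_max_left _ _,
    G.notMem_kNbhd_of_compl_neighborFinset_subset v hTS ?_⟩
  omega

lemma card_compl_neighborFinset_add_ncard (v : V) :
    #(G.neighborFinset v)ᶜ + (G.neighborSet v).ncard = Fintype.card V := by
  rw [← card_compl_add_card (G.neighborFinset v), neighborFinset_def, Set.ncard_eq_toFinset_card']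

end SimpleGraph

theorem stmt_5_general [Fintype V] (k : ℕ) (G : SimpleGraph V)
    (hβ : 1 ≤ bindingNum G k) :
    ∀ v : V, (Fintype.card V : ℝ) - ((Fintype.card V : ℝ) - 1) / bindingNum G k ≤
      ((G.neighborSet v).ncard : ℝ) := by
  intro v
  obtain ⟨S₀, hkS₀, hS₀⟩ := G.exists_kNbhd_ne_univ_of_bindingNum_ne_zero (by linarith)
  obtain ⟨S, hkS, hTS, hv⟩ := G.exists_notMem_kNbhd v (G.ne_zero_of_kNbhd_ne_univ hS₀)
    (hkS₀.trans (card_le_univ S₀))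
  have hβS := G.bindingNum_mul_card_le hkS (fun h ↦ hv (h ▸ mem_univ v))
  have hTS' : (Fintype.card V : ℝ) - (G.neighborSet v).ncard ≤ #S := by
    rw [← G.card_compl_neighborFinset_add_ncard v]
    push_cast
    linarith [(Nat.cast_le (α := ℝ)).mpr hTS]
  rw [sub_le_comm, le_div_iff₀ (by linarith)]
  linarith [mul_le_mul_of_nonneg_left hTS' (by linarith : 0 ≤ bindingNum G k)]

theorem stmt_5 [Fintype V] (k : ℕ) (hk : 2 ≤ k) (G : SimpleGraph V)
    (hβ : 1 ≤ bindingNum G k) :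
    ∀ v : V, (Fintype.card V : ℝ) - ((Fintype.card V : ℝ) - 1) / bindingNum G k ≤
      ((G.neighborSet v).ncard : ℝ) :=
  stmt_5_general k G hβ
end

section
/- Let k ≥ 2 be an integer. If G is a simple graph on exactly 2k vertices with β^k(G) ≥ 1, then G is the complete graph K_{2k}. -/
open Finset
open scoped Classical

variable {V : Type*}

theorem stmt_6 [Fintype V] (k : ℕ) (hk : 2 ≤ k) (G : SimpleGraph V)
    (hcard : Fintype.card V = 2 * k) (hβ : 1 ≤ bindingNum G k) :
    G = ⊤ := by
  by_contra hne
  have hpair : ∃ u v, u ≠ v ∧ ¬ G.Adj u v := by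
    by_contra hc
    push_neg at hc
    apply hne
    ext u v
    simp only [SimpleGraph.top_adj]
    exact ⟨fun h => h.ne, fun h => hc u v h⟩
  obtain ⟨u, v, huv, hadj⟩ := hpair
  have hA : k - 1 ≤ (Finset.univ \ {u, v} : Finset V).card := by
    rw [Finset.card_sdiff_of_subset (Finset.subset_univ _)]
    have h2 : ({u, v} : Finset V).card = 2 := Finset.card_pair huv
    rw [Finset.card_univ, hcard, h2]
    omega
  obtain ⟨T, hT, hTcard⟩ := Finset.exists_subset_card_eq hA
  set S := insert u T with hS
  have huT : u ∉ T := fun h => by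
    have := hT h; simp at this
  have hScard : S.card = k := by
    rw [hS, Finset.card_insert_of_notMem huT, hTcard]; omega
  have hvS : v ∉ S := by
    intro hv
    rcases Finset.mem_insert.mp hv with h | h
    · exact huv h.symm
    · have := hT h; simp at this
  have huS : u ∈ S := Finset.mem_insert_self _ _
  have hsub : kNbhd G k S ⊆ Finset.univ \ insert v S := by
    intro w hw
    simp only [kNbhd, Finset.mem_filter] at hw
    have hkle := hw.2
    simp only [Finset.mem_sdiff, Finset.mem_univ, true_and, Finset.mem_insert]
    push_neg
    constructor
    · rintro rfl
      have hsub2 : S.filter (fun x => G.Adj w x) ⊆ S.erase u := by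
        intro x hx
        simp only [Finset.mem_filter] at hx
        refine Finset.mem_erase.mpr ⟨?_, hx.1⟩
        rintro rfl
        exact hadj hx.2.symm
      have h1 := Finset.card_le_card hsub2
      have h2 : (S.erase u).card = k - 1 := by
        rw [Finset.card_erase_of_mem huS, hScard]
      omega
    · intro hwS
      have hsub2 : S.filter (fun x => G.Adj w x) ⊆ S.erase w := by
        intro x hx
        simp only [Finset.mem_filter] at hx
        refine Finset.mem_erase.mpr ⟨?_, hx.1⟩
        rintro rfl
        exact G.irrefl hx.2
      have h1 := Finset.card_le_card hsub2
      have h2 : (S.erase w).card = k - 1 := by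
        rw [Finset.card_erase_of_mem hwS, hScard]
      omega
  have hcardle : (kNbhd G k S).card ≤ k - 1 := by
    have h1 := Finset.card_le_card hsub
    rw [Finset.card_sdiff_of_subset (Finset.subset_univ _), Finset.card_univ, hcard,
      Finset.card_insert_of_notMem hvS, hScard] at h1
    omega
  have hmem : S ∈ Finset.univ.filter (fun S : Finset V =>
      k ≤ S.card ∧ kNbhd G k S ≠ Finset.univ) := by
    simp only [Finset.mem_filter, Finset.mem_univ, true_and]
    refine ⟨hScard.ge, ?_⟩
    intro h
    have hv : v ∈ kNbhd G k S := h ▸ Finset.mem_univ v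
    have := hsub hv
    simp at this
  have hne' : (Finset.univ.filter (fun S : Finset V =>
      k ≤ S.card ∧ kNbhd G k S ≠ Finset.univ)).Nonempty := ⟨S, hmem⟩
  rw [bindingNum, dif_pos hne'] at hβ
  have hle := Finset.inf'_le (fun S : Finset V =>
    ((kNbhd G k S).card : ℝ) / (S.card : ℝ)) hmem
  have hlt : ((kNbhd G k S).card : ℝ) / (S.card : ℝ) < 1 := by
    rw [hScard, div_lt_one (by exact_mod_cast (by omega : 0 < k) : (0:ℝ) < k)]
    exact_mod_cast lt_of_le_of_lt hcardle (by omega)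
  linarith [hβ.trans hle]
end

section
/- Let k ≥ 2 be an integer and G a simple graph on n vertices with β := β^k(G). Then the independence number satisfies α(G) ≤ n/(β + 1). -/
open Finset
open scoped Classical

variable {V : Type*}

lemma bindingNum_nonneg [Fintype V] (G : SimpleGraph V) (k : ℕ) :
    0 ≤ bindingNum G k := by
  rw [bindingNum]
  split_ifs with h
  · exact Finset.le_inf' h _ fun S _ => by positivity
  · exact le_refl 0

lemma bindingNum_le [Fintype V] (G : SimpleGraph V) (k : ℕ) (S : Finset V)
    (h1 : k ≤ S.card) (h2 : kNbhd G k S ≠ Finset.univ) :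
    bindingNum G k ≤ ((kNbhd G k S).card : ℝ) / (S.card : ℝ) := by
  have hS : S ∈ Finset.univ.filter fun S : Finset V =>
      k ≤ S.card ∧ kNbhd G k S ≠ Finset.univ := by
    simp [h1, h2]
  rw [bindingNum, dif_pos ⟨S, hS⟩]
  exact Finset.inf'_le _ hS

lemma mem_kNbhd_adj [Fintype V] {G : SimpleGraph V} {k : ℕ} (hk : 1 ≤ k) {S : Finset V}
    {v : V} (hv : v ∈ kNbhd G k S) : ∃ u ∈ S, G.Adj v u := by
  simp only [kNbhd, Finset.mem_filter, Finset.mem_univ, true_and] at hv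
  have : (S.filter fun u => G.Adj v u).Nonempty := by
    rw [← Finset.card_pos]; omega
  obtain ⟨u, hu⟩ := this
  simp only [Finset.mem_filter] at hu
  exact ⟨u, hu.1, hu.2⟩

theorem stmt_7 [Fintype V] (k : ℕ) (hk : 2 ≤ k) (G : SimpleGraph V) :
    ∀ I : Finset V, (∀ u ∈ I, ∀ v ∈ I, ¬ G.Adj u v) →
      (I.card : ℝ) ≤ (Fintype.card V : ℝ) / (bindingNum G k + 1) := by
  intro I hI
  have hb0 : 0 ≤ bindingNum G k := bindingNum_nonneg G k
  have hb1 : (0:ℝ) < bindingNum G k + 1 := by linarith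
  rw [le_div_iff₀ hb1]
  have hIn : I.card ≤ Fintype.card V := Finset.card_le_univ I
  by_cases hne : (Finset.univ.filter fun S : Finset V =>
      k ≤ S.card ∧ kNbhd G k S ≠ Finset.univ).Nonempty
  · by_cases hIk : k ≤ I.card
    · -- use S = I
      have hdisj : ∀ v ∈ kNbhd G k I, v ∉ I := by
        intro v hv hvI
        obtain ⟨u, huI, hadj⟩ := mem_kNbhd_adj (by omega) hv
        exact hI v hvI u huI hadj
      have hsub : kNbhd G k I ⊆ Iᶜ := fun v hv => Finset.mem_compl.2 (hdisj v hv)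
      have hne' : kNbhd G k I ≠ Finset.univ := by
        obtain ⟨v, hv⟩ : I.Nonempty := Finset.card_pos.1 (by omega)
        intro h
        exact hdisj v (h ▸ Finset.mem_univ v) hv
      have hle := bindingNum_le G k I hIk hne'
      have hcard : (kNbhd G k I).card ≤ Fintype.card V - I.card := by
        calc (kNbhd G k I).card ≤ Iᶜ.card := Finset.card_le_card hsub
        _ = Fintype.card V - I.card := Finset.card_compl I
      have hIpos : (0:ℝ) < I.card := by
        have : 0 < I.card := by omega
        exact_mod_cast this
      have h2 : ((kNbhd G k I).card : ℝ) ≤ (Fintype.card V : ℝ) - I.card := by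
        calc ((kNbhd G k I).card : ℝ) ≤ ((Fintype.card V - I.card : ℕ) : ℝ) := by
              exact_mod_cast hcard
          _ = (Fintype.card V : ℝ) - I.card := by push_cast [Nat.cast_sub hIn]; ring
      rw [le_div_iff₀ hIpos] at hle
      nlinarith
    · -- |I| < k; get n ≥ k and take any S of size k
      obtain ⟨S₀, hS₀⟩ := hne
      simp only [Finset.mem_filter, Finset.mem_univ, true_and] at hS₀
      have hnk : k ≤ Fintype.card V := le_trans hS₀.1 (Finset.card_le_univ S₀)
      obtain ⟨S, hSsub, hScard⟩ := Finset.exists_subset_card_eq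
        (show k ≤ (Finset.univ : Finset V).card by simpa using hnk)
      have hSne : kNbhd G k S ≠ Finset.univ := by
        obtain ⟨v, hv⟩ : S.Nonempty := Finset.card_pos.1 (by omega)
        intro h
        have hvN : v ∈ kNbhd G k S := h ▸ Finset.mem_univ v
        simp only [kNbhd, Finset.mem_filter, Finset.mem_univ, true_and] at hvN
        have hfe : (S.filter fun u => G.Adj v u) = S := by
          apply Finset.eq_of_subset_of_card_le (Finset.filter_subset _ _)
          omega
        have : v ∈ S.filter fun u => G.Adj v u := by rw [hfe]; exact hv
        simp only [Finset.mem_filter] at this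
        exact G.irrefl this.2
      have hle := bindingNum_le G k S (le_of_eq hScard.symm) hSne
      have hkpos : (0:ℝ) < k := by exact_mod_cast (by omega : 0 < k)
      have hNle : ((kNbhd G k S).card : ℝ) ≤ (Fintype.card V : ℝ) - k := by
        have h1 : (kNbhd G k S).card < Fintype.card V :=
          Finset.card_lt_card (Finset.ssubset_univ_iff.2 hSne)
        have h2 : ∀ v ∈ kNbhd G k S, v ∉ S := by
          intro v hv hvS
          obtain ⟨u, huS, hadj⟩ := mem_kNbhd_adj (by omega) hv
          simp only [kNbhd, Finset.mem_filter, Finset.mem_univ, true_and] at hv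
          have hfe : (S.filter fun u => G.Adj v u) = S := by
            apply Finset.eq_of_subset_of_card_le (Finset.filter_subset _ _)
            omega
          have : v ∈ S.filter fun u => G.Adj v u := by rw [hfe]; exact hvS
          simp only [Finset.mem_filter] at this
          exact G.irrefl this.2
        have hsub : kNbhd G k S ⊆ Sᶜ := fun v hv => Finset.mem_compl.2 (h2 v hv)
        have : (kNbhd G k S).card ≤ Fintype.card V - k := by
          calc (kNbhd G k S).card ≤ Sᶜ.card := Finset.card_le_card hsub
          _ = Fintype.card V - k := by rw [Finset.card_compl, hScard]
        calc ((kNbhd G k S).card : ℝ) ≤ ((Fintype.card V - k : ℕ) : ℝ) := by exact_mod_cast this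
          _ = (Fintype.card V : ℝ) - k := by push_cast [Nat.cast_sub hnk]; ring
      rw [hScard] at hle
      rw [le_div_iff₀ hkpos] at hle
      have hIlt : (I.card : ℝ) ≤ (k:ℝ) - 1 := by
        have : I.card ≤ k - 1 := by omega
        have h := (Nat.cast_le (α := ℝ)).2 this
        have : ((k - 1 : ℕ) : ℝ) = (k:ℝ) - 1 := by push_cast [Nat.cast_sub (by omega : 1 ≤ k)]; ring
        linarith [h, this.symm.le]
      have hncast : (k:ℝ) ≤ Fintype.card V := by exact_mod_cast hnk
      nlinarith [hb0, Nat.cast_nonneg (α := ℝ) I.card]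
  · have : bindingNum G k = 0 := by rw [bindingNum, dif_neg hne]
    rw [this]
    simpa using (Nat.cast_le (α := ℝ)).2 hIn
end

section
/- Let k ≥ 2 be an integer and G a simple graph on n vertices with β := β^k(G) ≥ 1. Then α(G) ≤ (n − β(k − 1))/(β + 1). -/
open Finset
open scoped Classical

variable {V : Type*}

theorem stmt_8 [Fintype V] (k : ℕ) (hk : 2 ≤ k) (G : SimpleGraph V)
    (hβ : 1 ≤ bindingNum G k) :
    ∀ I : Finset V, (∀ u ∈ I, ∀ v ∈ I, ¬ G.Adj u v) →
      (I.card : ℝ) ≤ ((Fintype.card V : ℝ) - bindingNum G k * ((k : ℝ) - 1)) /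
        (bindingNum G k + 1) := by
  intro I hI
  set β := bindingNum G k with hβdef
  set n := Fintype.card V with hn
  have hkpos : (0:ℕ) < k := by omega
  -- the candidate set is nonempty
  have hne : (Finset.univ.filter fun S : Finset V =>
      k ≤ S.card ∧ kNbhd G k S ≠ Finset.univ).Nonempty := by
    by_contra h
    rw [hβdef, bindingNum, dif_neg h] at hβ
    linarith
  -- key bound
  have key : ∀ S : Finset V, k ≤ S.card → kNbhd G k S ≠ Finset.univ →
      β * S.card ≤ ((kNbhd G k S).card : ℝ) := by
    intro S h1 h2
    have hβle : β ≤ ((kNbhd G k S).card : ℝ) / (S.card : ℝ) := by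
      rw [hβdef, bindingNum, dif_pos hne]
      exact Finset.inf'_le _ (by simp [h1, h2])
    have hS : (0:ℝ) < (S.card : ℝ) := by
      have : 0 < S.card := by omega
      exact_mod_cast this
    calc β * S.card ≤ (((kNbhd G k S).card : ℝ) / (S.card : ℝ)) * S.card := by
          exact mul_le_mul_of_nonneg_right hβle hS.le
      _ = ((kNbhd G k S).card : ℝ) := by field_simp
  have hβpos : (0:ℝ) < β + 1 := by linarith
  -- n ≥ k and β*(k-1) ≤ n
  obtain ⟨S₀, hS₀⟩ := hne
  simp only [Finset.mem_filter, Finset.mem_univ, true_and] at hS₀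
  have hS₀card : S₀.card ≤ n := Finset.card_le_univ S₀
  have hnk : k ≤ n := le_trans hS₀.1 hS₀card
  have hΛ₀ : (kNbhd G k S₀).card < n := by
    have := Finset.card_lt_card (Finset.ssubset_univ_iff.mpr hS₀.2)
    simpa [hn] using this
  have hβkn : β * k ≤ (n : ℝ) - 1 := by
    have h1 := key S₀ hS₀.1 hS₀.2
    have h2 : ((kNbhd G k S₀).card : ℝ) ≤ (n:ℝ) - 1 := by
      have : (kNbhd G k S₀).card + 1 ≤ n := hΛ₀
      have := (Nat.cast_le (α := ℝ)).mpr this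
      push_cast at this; linarith
    have h3 : β * k ≤ β * S₀.card := by
      have : (k:ℝ) ≤ (S₀.card:ℝ) := by exact_mod_cast hS₀.1
      nlinarith
    linarith
  rcases Finset.eq_empty_or_nonempty I with hIe | hIne
  · simp [hIe]
    apply div_nonneg _ hβpos.le
    have : β * ((k:ℝ) - 1) ≤ (n:ℝ) - 1 := by nlinarith
    linarith
  · -- I nonempty
    have hm1 : 1 ≤ I.card := Finset.card_pos.mpr hIne
    obtain ⟨v₀, hv₀⟩ := hIne
    -- a vertex of I is never in kNbhd of a set whose I-part is trivial
    rcases le_or_gt (k - 1) (n - I.card) with hcase | hcase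
    · -- main case: pick T ⊆ univ \ I with |T| = k-1
      have hcompl : k - 1 ≤ (Finset.univ \ I).card := by
        rw [Finset.card_sdiff_of_subset (Finset.subset_univ I)]
        simpa [hn] using hcase
      obtain ⟨T, hT, hTcard⟩ := Finset.exists_subset_card_eq hcompl
      have hdisj : Disjoint I T := by
        refine Finset.disjoint_left.mpr fun a ha haT => ?_
        have := hT haT
        simp at this
        exact this ha
      set S := I ∪ T with hSdef
      have hScard : S.card = I.card + (k - 1) := by
        rw [hSdef, Finset.card_union_of_disjoint hdisj, hTcard]
      have hSk : k ≤ S.card := by omega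
      -- I ∩ kNbhd = ∅
      have hInb : ∀ v ∈ I, v ∉ kNbhd G k S := by
        intro v hv hvΛ
        simp only [kNbhd, Finset.mem_filter, Finset.mem_univ, true_and] at hvΛ
        have hsub : (S.filter fun u => G.Adj v u) ⊆ T := by
          intro u hu
          simp only [Finset.mem_filter, hSdef, Finset.mem_union] at hu
          rcases hu.1 with h | h
          · exact absurd hu.2 (hI v hv u h)
          · exact h
        have := Finset.card_le_card hsub
        omega
      have hΛne : kNbhd G k S ≠ Finset.univ := by
        intro h
        exact hInb v₀ hv₀ (h.symm ▸ Finset.mem_univ v₀)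
      have hΛsub : kNbhd G k S ⊆ Finset.univ \ I := by
        intro v hv
        simp only [Finset.mem_sdiff, Finset.mem_univ, true_and]
        exact fun hvI => hInb v hvI hv
      have hΛcard : ((kNbhd G k S).card : ℝ) ≤ (n:ℝ) - I.card := by
        have h1 := Finset.card_le_card hΛsub
        rw [Finset.card_sdiff_of_subset (Finset.subset_univ I), Finset.card_univ] at h1
        have hIn : I.card ≤ Fintype.card V :=
          le_of_le_of_eq (Finset.card_le_univ I) Finset.card_univ
        have h2 := (Nat.cast_le (α := ℝ)).mpr h1
        rw [Nat.cast_sub hIn] at h2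
        simpa [hn] using h2
      have hmain := key S hSk hΛne
      have hScast : (S.card : ℝ) = (I.card : ℝ) + ((k:ℝ) - 1) := by
        rw [hScard]
        push_cast [Nat.cast_sub (by omega : 1 ≤ k)]
        ring
      rw [hScast] at hmain
      rw [le_div_iff₀ hβpos]
      nlinarith
    · -- degenerate case: n - |I| < k - 1, use S = univ, derive contradiction
      exfalso
      have hInb : ∀ v ∈ I, v ∉ kNbhd G k Finset.univ := by
        intro v hv hvΛ
        simp only [kNbhd, Finset.mem_filter, Finset.mem_univ, true_and] at hvΛ
        have hsub : (Finset.univ.filter fun u => G.Adj v u) ⊆ Finset.univ \ I := by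
          intro u hu
          simp only [Finset.mem_filter, Finset.mem_univ, true_and] at hu
          simp only [Finset.mem_sdiff, Finset.mem_univ, true_and]
          exact fun huI => hI v hv u huI hu
        have h1 := Finset.card_le_card hsub
        rw [Finset.card_sdiff_of_subset (Finset.subset_univ I), Finset.card_univ] at h1
        omega
      have hΛne : kNbhd G k (Finset.univ : Finset V) ≠ Finset.univ := by
        intro h
        exact hInb v₀ hv₀ (h.symm ▸ Finset.mem_univ v₀)
      have hmain := key Finset.univ (by simpa [hn] using hnk) hΛne
      have hΛsub : kNbhd G k (Finset.univ : Finset V) ⊆ Finset.univ \ I := by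
        intro v hv
        simp only [Finset.mem_sdiff, Finset.mem_univ, true_and]
        exact fun hvI => hInb v hvI hv
      have h1 := Finset.card_le_card hΛsub
      rw [Finset.card_sdiff_of_subset (Finset.subset_univ I)] at h1
      have hcard : (Finset.univ : Finset V).card = n := by simp [hn]
      rw [hcard] at hmain h1
      have hIn : I.card ≤ n := Finset.card_le_univ I
      have h2 : ((kNbhd G k (Finset.univ : Finset V)).card : ℝ) ≤ (n:ℝ) - I.card := by
        have := (Nat.cast_le (α := ℝ)).mpr h1
        rw [Nat.cast_sub hIn] at this
        exact this
      have hmcast : (1:ℝ) ≤ (I.card : ℝ) := by exact_mod_cast hm1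
      nlinarith [hβ, hmain, h2]
end

section
/- Let k ≥ 2 be an integer, G a simple graph, and F a spanning subgraph of G with maximum degree Δ(F) ≤ k − 2. If β^k(G) ≥ 1, then β^2(G − E(F)) ≥ 1, where G − E(F) is the graph on V(G) with edge set E(G) \ E(F). -/
open Finset
open scoped Classical

variable {V : Type*}

/-
Write k = m + 2. If β^k(G) ≥ 1, then for a k-set T every vertex of Λ^k(T) is adjacent to all
of T and lies outside T. Applying the expansion to a k-set T ⊇ {x, y}, first an arbitrary one and
then one padded with m common neighbours of x and y, shows that distinct vertices x, y have at
least 2m + 2 common neighbours.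

Let H = G − E(F) and |S| ≥ 2. If |S| ≥ k, a vertex with k G-neighbours in S keeps at least two of
them in H, so Λ^k_G(S) ⊆ Λ^2_H(S) and the expansion of G suffices. If |S| < k, fix x ∈ S and
double count the pairs (y, v) with y ∈ S \ {x} and v a common G-neighbour of x and y: there are
at least (|S| - 1)(2m + 2). A vertex v ∉ Λ^2_H(S) has at most one H-neighbour in S, so it
contributes at most its F-degree into S, and these contributions total at most |S| m; a vertex
of Λ^2_H(S) contributes at most |S| - 1. If |Λ^2_H(S)| < |S| this gives
(|S| - 1)(2m + 2) ≤ (|S| - 1)² + |S| m, which fails for 2 ≤ |S| ≤ m + 1.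
-/

section

variable {G F H : SimpleGraph V} {k m : ℕ} {S T : Finset V}

lemma card_filter_adj_le_add (hGFH : G ≤ F ⊔ H) (S : Finset V) (v : V) :
    #{u ∈ S | G.Adj v u} ≤ #{u ∈ S | F.Adj v u} + #{u ∈ S | H.Adj v u} := by
  refine (card_le_card fun u hu => ?_).trans (card_union_le _ _)
  rw [mem_filter] at hu
  simpa [mem_union, mem_filter, hu.1] using hGFH hu.2

variable [Fintype V]

lemma mem_kNbhd_iff_of_card_eq (hT : #T = k) {v : V} :
    v ∈ kNbhd G k T ↔ ∀ u ∈ T, G.Adj v u := by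
  simp only [kNbhd, mem_filter, mem_univ, true_and, ← hT]
  refine ⟨fun h u hu => ?_, fun h => (card_le_card fun u hu => mem_filter.2 ⟨hu, h u hu⟩)⟩
  rw [← eq_of_subset_of_card_le (filter_subset _ T) h] at hu
  exact (mem_filter.1 hu).2

lemma disjoint_kNbhd_of_card_eq (hT : #T = k) : Disjoint (kNbhd G k T) T :=
  disjoint_left.2 fun v hv hvT => G.irrefl ((mem_kNbhd_iff_of_card_eq hT).1 hv v hvT)

lemma kNbhd_ne_univ_of_card_eq (hk : 0 < k) (hT : #T = k) : kNbhd G k T ≠ univ := by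
  obtain ⟨t, ht⟩ := card_pos.1 (hT ▸ hk)
  intro h
  exact disjoint_left.1 (disjoint_kNbhd_of_card_eq (G := G) hT) (h ▸ mem_univ t) ht

lemma exists_kNbhd_ne_univ_iff (hk : 0 < k) :
    (∃ S : Finset V, k ≤ #S ∧ kNbhd G k S ≠ univ) ↔ k ≤ Fintype.card V := by
  refine ⟨fun ⟨S, hS, _⟩ => hS.trans (card_le_univ S), fun hV => ?_⟩
  obtain ⟨T, -, hT⟩ := exists_subset_card_eq (s := (univ : Finset V)) (n := k) (by simpa using hV)
  exact ⟨T, hT.ge, kNbhd_ne_univ_of_card_eq hk hT⟩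

lemma one_le_bindingNum_iff (hk : 0 < k) :
    1 ≤ bindingNum G k ↔ k ≤ Fintype.card V ∧
      ∀ S : Finset V, k ≤ #S → kNbhd G k S ≠ univ → #S ≤ #(kNbhd G k S) := by
  unfold bindingNum
  split_ifs with hne
  · have hV : k ≤ Fintype.card V := by
      obtain ⟨S, hS⟩ := hne
      exact (exists_kNbhd_ne_univ_iff hk).1 ⟨S, (mem_filter.1 hS).2⟩
    simp only [le_inf'_iff, mem_filter, mem_univ, true_and, and_imp]
    refine ⟨fun h => ⟨hV, fun S hS hSne => ?_⟩, fun h S hS hSne => ?_⟩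
    · have hpos : (0 : ℝ) < #S := by exact_mod_cast hk.trans_le hS
      exact_mod_cast (one_le_div hpos).1 (h S hS hSne)
    · have hpos : (0 : ℝ) < #S := by exact_mod_cast hk.trans_le hS
      exact (one_le_div hpos).2 (by exact_mod_cast h.2 S hS hSne)
  · refine ⟨fun h => absurd h (by norm_num), fun h => absurd ?_ hne⟩
    obtain ⟨S, hS⟩ := (exists_kNbhd_ne_univ_iff hk).2 h.1
    exact ⟨S, by simpa using hS⟩

lemma two_mul_add_two_le_card_commonNbrs (hβ : 1 ≤ bindingNum G (m + 2)) {x y : V}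
    (hxy : x ≠ y) : 2 * m + 2 ≤ #{v | G.Adj v x ∧ G.Adj v y} := by
  obtain ⟨hV, hexp⟩ := (one_le_bindingNum_iff (by omega)).1 hβ
  set C : Finset V := {v | G.Adj v x ∧ G.Adj v y}
  have key : ∀ T : Finset V, #T = m + 2 → x ∈ T → y ∈ T → m + 2 ≤ #(C \ T) := by
    intro T hT hx hy
    have hsub : kNbhd G (m + 2) T ⊆ C \ T := fun v hv => by
      have hadj := (mem_kNbhd_iff_of_card_eq hT).1 hv
      refine mem_sdiff.2 ⟨by simp [C, hadj x hx, hadj y hy], ?_⟩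
      exact disjoint_left.1 (disjoint_kNbhd_of_card_eq hT) hv
    exact (hT ▸ hexp T hT.ge (kNbhd_ne_univ_of_card_eq (by omega) hT)).trans (card_le_card hsub)
  have hpair : #({x, y} : Finset V) = 2 := card_pair hxy
  obtain ⟨T₀, hxyT₀, -, hT₀⟩ := exists_subsuperset_card_eq (subset_univ {x, y})
    (n := m + 2) (by omega) (by rwa [card_univ])
  have hC : m ≤ #C := by
    have := (key T₀ hT₀ (hxyT₀ (by simp)) (hxyT₀ (by simp))).trans (card_le_card sdiff_subset)
    omega
  obtain ⟨B, hBC, hB⟩ := exists_subset_card_eq hC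
  have hxyB : Disjoint ({x, y} : Finset V) B := by
    refine disjoint_left.2 fun u hu huB => ?_
    have := (mem_filter.1 (hBC huB)).2
    rcases mem_insert.1 hu with rfl | hu
    · exact G.irrefl this.1
    · exact G.irrefl (mem_singleton.1 hu ▸ this.2)
  have hpadded := key ({x, y} ∪ B) (by rw [card_union_of_disjoint hxyB, hpair, hB, add_comm])
    (by simp) (by simp)
  have : #(C \ ({x, y} ∪ B)) ≤ #C - m := by
    rw [← hB, ← card_sdiff_of_subset hBC]
    exact card_le_card (sdiff_subset_sdiff subset_rfl subset_union_right)
  omega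

lemma card_filter_adj_le_ncard_neighborSet (S : Finset V) (v : V) :
    #{u ∈ S | F.Adj v u} ≤ (F.neighborSet v).ncard := by
  rw [← Set.ncard_coe_finset]
  exact Set.ncard_le_ncard (fun u hu => (mem_filter.1 hu).2) (Set.toFinite _)

lemma sum_card_filter_adj_le (hF : ∀ v, (F.neighborSet v).ncard ≤ m) (S : Finset V) :
    ∑ v, #{u ∈ S | F.Adj v u} ≤ #S * m := by
  have hswap := sum_card_bipartiteAbove_eq_sum_card_bipartiteBelow
    (s := (univ : Finset V)) (t := S) (r := F.Adj)
  simp only [bipartiteAbove, bipartiteBelow] at hswap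
  rw [hswap, ← smul_eq_mul, ← sum_const]
  refine sum_le_sum fun u _ => le_trans (le_of_eq ?_)
    ((card_filter_adj_le_ncard_neighborSet univ u).trans (hF u))
  simp only [F.adj_comm]

lemma kNbhd_subset_kNbhd_of_le_sup (hGFH : G ≤ F ⊔ H) (hF : ∀ v, (F.neighborSet v).ncard ≤ m)
    (j : ℕ) (S : Finset V) : kNbhd G (m + j) S ⊆ kNbhd H j S := by
  intro v hv
  simp only [kNbhd, mem_filter, mem_univ, true_and] at hv ⊢
  have := card_filter_adj_le_add hGFH S v
  have := (card_filter_adj_le_ncard_neighborSet (F := F) S v).trans (hF v)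
  omega

lemma card_le_card_kNbhd_two_of_card_lt
    (hcommon : ∀ x y, x ≠ y → 2 * m + 2 ≤ #{v | G.Adj v x ∧ G.Adj v y})
    (hGFH : G ≤ F ⊔ H) (hF : ∀ v, (F.neighborSet v).ncard ≤ m)
    (hS2 : 2 ≤ #S) (hSm : #S < m + 2) : #S ≤ #(kNbhd H 2 S) := by
  by_contra! hD
  set D := kNbhd H 2 S
  obtain ⟨x, hx⟩ : S.Nonempty := card_pos.1 (by omega)
  set S' := S.erase x
  set N : Finset V := {v | G.Adj v x}
  have hS' : #S' + 1 = #S := card_erase_add_one hx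
  have hlower : #S' * (2 * m + 2) ≤ ∑ v ∈ N, #{y ∈ S' | G.Adj v y} :=
    calc #S' * (2 * m + 2) ≤ ∑ y ∈ S', #{v ∈ N | G.Adj v y} := by
          rw [← smul_eq_mul]
          refine card_nsmul_le_sum _ _ _ fun y hy => ?_
          rw [filter_filter]
          exact hcommon x y (ne_of_mem_erase hy).symm
      _ = ∑ v ∈ N, #{y ∈ S' | G.Adj v y} :=
          sum_card_bipartiteAbove_eq_sum_card_bipartiteBelow (r := fun y v => G.Adj v y)
  have houtside : ∀ v ∈ N, v ∉ D → #{y ∈ S' | G.Adj v y} ≤ #{u ∈ S | F.Adj v u} := by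
    intro v hvx hvD
    have hGS : #{y ∈ S' | G.Adj v y} + 1 = #{u ∈ S | G.Adj v u} := by
      rw [filter_erase]
      exact card_erase_add_one (mem_filter.2 ⟨hx, (mem_filter.1 hvx).2⟩)
    have hH : #{u ∈ S | H.Adj v u} < 2 := by simpa [D, kNbhd] using hvD
    have := card_filter_adj_le_add hGFH S v
    omega
  have hupper : ∑ v ∈ N, #{y ∈ S' | G.Adj v y} ≤ #D * #S' + #S * m := by
    rw [← sum_inter_add_sum_sdiff N D]
    gcongr ?_ + ?_
    · calc ∑ v ∈ N ∩ D, #{y ∈ S' | G.Adj v y} ≤ ∑ v ∈ N ∩ D, #S' :=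
            sum_le_sum fun v _ => card_filter_le _ _
        _ = #(N ∩ D) * #S' := by rw [sum_const, smul_eq_mul]
        _ ≤ #D * #S' := Nat.mul_le_mul_right _ (card_le_card inter_subset_right)
    · calc ∑ v ∈ N \ D, #{y ∈ S' | G.Adj v y} ≤ ∑ v ∈ N \ D, #{u ∈ S | F.Adj v u} :=
            sum_le_sum fun v hv => houtside v (mem_sdiff.1 hv).1 (mem_sdiff.1 hv).2
        _ ≤ ∑ v, #{u ∈ S | F.Adj v u} := sum_le_sum_of_subset (subset_univ _)
        _ ≤ #S * m := sum_card_filter_adj_le hF S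
  nlinarith

end

theorem stmt_14_general [Fintype V] (k : ℕ) (hk : 2 ≤ k) (G F : SimpleGraph V)
    (hΔ : ∀ v : V, (F.neighborSet v).ncard ≤ k - 2)
    (hβ : 1 ≤ bindingNum G k) :
    1 ≤ bindingNum (G \ F) 2 := by
  obtain ⟨m, rfl⟩ : ∃ m, k = m + 2 := ⟨k - 2, by omega⟩
  rw [Nat.add_sub_cancel] at hΔ
  have hcover : G ≤ F ⊔ G \ F := le_sup_sdiff
  obtain ⟨hV, hexp⟩ := (one_le_bindingNum_iff (by omega)).1 hβ
  refine (one_le_bindingNum_iff two_pos).2 ⟨by omega, fun S hS2 hSne => ?_⟩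
  rcases lt_or_ge #S (m + 2) with hsmall | hlarge
  · exact card_le_card_kNbhd_two_of_card_lt
      (fun x y => two_mul_add_two_le_card_commonNbrs hβ) hcover hΔ hS2 hsmall
  · have hsub := kNbhd_subset_kNbhd_of_le_sup hcover hΔ 2 S
    exact (hexp S hlarge fun h => hSne (univ_subset_iff.1 (h ▸ hsub))).trans (card_le_card hsub)

theorem stmt_14 [Fintype V] (k : ℕ) (hk : 2 ≤ k) (G F : SimpleGraph V)
    (hFG : F ≤ G) (hΔ : ∀ v : V, (F.neighborSet v).ncard ≤ k - 2)
    (hβ : 1 ≤ bindingNum G k) :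
    1 ≤ bindingNum (G \ F) 2 :=
  stmt_14_general k hk G F hΔ hβ
end

section
/- Let k ≥ 1 and let G be a bipartite graph with bipartition (X, Y) such that β^k(G, X) ≥ 1. Then G contains k pairwise edge-disjoint matchings, each of which covers every vertex of X. -/
open Finset
open scoped Classical

variable {V : Type*}

/-- The weak bipartite k-th binding number, for a bipartite graph with part `X`. -/
noncomputable def bipBindingNum [Fintype V] (G : SimpleGraph V) (k : ℕ) (X : Finset V) : ℝ :=
  if h : (X.powerset.filter fun S : Finset V => k ≤ S.card).Nonempty then
    (X.powerset.filter fun S : Finset V => k ≤ S.card).inf' h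
      fun S => ((kNbhd G k S).card : ℝ) / (S.card : ℝ)
  else 0



/-! Encode a bipartite graph by the neighbourhoods `N x` of its left vertices. A Hall-type
theorem for degree-constrained subgraphs, proved by the Halmos–Vaughan induction (split along a
tight set, or else commit one edge), turns `k * #S ≤ ∑ y, min k (degIn S N y)` for all `S ⊆ X`
into a subgraph in which every `x ∈ X` has degree `k` and every other vertex degree at most `k`.
The hypothesis `β^k ≥ 1` gives this condition: `Λ^k(S)` is large when `#S ≥ k`, and when `#S < k`
the vertices of `Λ^k(S')` for a `k`-set `S' ⊇ S` are adjacent to all of `S`. Such a subgraph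
splits into `k` matchings saturating `X`: Hall's theorem with `#Y - #X` dummy vertices, which may
only use vertices of degree `< k`, gives a matching saturating `X` and covering every vertex of
degree `k`, and removing it lowers the maximum degree to `k - 1`. -/

variable {α β : Type*}

noncomputable def degIn (S : Finset α) (N : α → Finset β) (y : β) : ℕ := #{x ∈ S | y ∈ N x}

section degIn

variable {S T : Finset α} {N B : α → Finset β} {y : β}

lemma degIn_union (h : Disjoint S T) : degIn (S ∪ T) N y = degIn S N y + degIn T N y := by
  rw [degIn, filter_union, card_union_of_disjoint (disjoint_filter_filter h)]; rfl

lemma degIn_congr (h : ∀ x ∈ S, y ∈ B x ↔ y ∈ N x) : degIn S B y = degIn S N y := by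
  rw [degIn, degIn, filter_congr h]

lemma degIn_mono (h : ∀ x ∈ S, B x ⊆ N x) : degIn S B y ≤ degIn S N y :=
  card_le_card fun x hx => by
    rw [mem_filter] at hx ⊢
    exact ⟨hx.1, h x hx.1 hx.2⟩

lemma degIn_le_degIn_add_ite {B' : α → Finset β} {x₀ : α} {y₀ : β}
    (h : ∀ x ∈ S, x ≠ x₀ → B x ⊆ B' x) (h₀ : B x₀ ⊆ insert y₀ (B' x₀)) :
    degIn S B y ≤ degIn S B' y + if y = y₀ then 1 else 0 := by
  split_ifs with hy
  · refine (card_le_card fun x hx => ?_).trans (card_insert_le x₀ _)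
    rw [mem_filter] at hx
    rcases eq_or_ne x x₀ with rfl | hx₀
    · exact mem_insert_self _ _
    · exact mem_insert_of_mem (mem_filter.2 ⟨hx.1, h x hx.1 hx₀ hx.2⟩)
  · refine card_le_card fun x hx => ?_
    rw [mem_filter] at hx ⊢
    refine ⟨hx.1, ?_⟩
    rcases eq_or_ne x x₀ with rfl | hx₀
    · exact (mem_insert.1 (h₀ hx.2)).resolve_left hy
    · exact h x hx.1 hx₀ hx.2

lemma degIn_univ_subtype : degIn (univ : Finset S) (fun x => N x) y = degIn S N y := by
  rw [degIn, degIn, ← card_map (Function.Embedding.subtype _)]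
  congr 1
  ext
  simp [and_comm]

lemma sum_degIn [Fintype β] : ∑ y, degIn S N y = ∑ x ∈ S, #(N x) := by
  simpa [degIn, bipartiteAbove, bipartiteBelow] using
    (sum_card_bipartiteAbove_eq_sum_card_bipartiteBelow (s := S) (t := univ)
      (r := fun x y => y ∈ N x)).symm

end degIn

structure IsDegreeFactor (X : Finset α) (N : α → Finset β) (d : α → ℕ) (c : β → ℕ)
    (B : α → Finset β) : Prop where
  subset : ∀ x ∈ X, B x ⊆ N x
  card_eq : ∀ x ∈ X, #(B x) = d x
  degIn_le : ∀ y, degIn X B y ≤ c y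

def DegreeHallCondition [Fintype β] (X : Finset α) (N : α → Finset β) (d : α → ℕ) (c : β → ℕ) :
    Prop :=
  ∀ S ⊆ X, ∑ x ∈ S, d x ≤ ∑ y, min (c y) (degIn S N y)

section DegreeFactor

variable {X : Finset α} {N : α → Finset β} {d : α → ℕ} {c : β → ℕ}

lemma IsDegreeFactor.piecewise {S T : Finset α} {B₁ B₂ : α → Finset β}
    (h₁ : IsDegreeFactor S N d c B₁) (h₂ : IsDegreeFactor T N d (fun y => c y - degIn S B₁ y) B₂)
    (hST : Disjoint S T) : IsDegreeFactor (S ∪ T) N d c (S.piecewise B₁ B₂) where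
  subset x hx := by
    rcases mem_union.1 hx with hxS | hxT
    · rw [piecewise_eq_of_mem _ _ _ hxS]; exact h₁.subset x hxS
    · rw [piecewise_eq_of_notMem _ _ _ (disjoint_right.1 hST hxT)]; exact h₂.subset x hxT
  card_eq x hx := by
    rcases mem_union.1 hx with hxS | hxT
    · rw [piecewise_eq_of_mem _ _ _ hxS]; exact h₁.card_eq x hxS
    · rw [piecewise_eq_of_notMem _ _ _ (disjoint_right.1 hST hxT)]; exact h₂.card_eq x hxT
  degIn_le y := by
    have e₁ : degIn S (S.piecewise B₁ B₂) y = degIn S B₁ y :=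
      degIn_congr fun x hx => by rw [piecewise_eq_of_mem _ _ _ hx]
    have e₂ : degIn T (S.piecewise B₁ B₂) y = degIn T B₂ y :=
      degIn_congr fun x hx => by rw [piecewise_eq_of_notMem _ _ _ (disjoint_right.1 hST hx)]
    have := h₁.degIn_le y
    have := h₂.degIn_le y
    rw [degIn_union hST, e₁, e₂]
    omega

lemma IsDegreeFactor.of_update {B : α → Finset β} {x₀ : α} {y₀ : β} (hx₀ : x₀ ∈ X)
    (hd : 0 < d x₀) (hy₀ : y₀ ∈ N x₀) (hc : 0 < c y₀)
    (h : IsDegreeFactor X (Function.update N x₀ ((N x₀).erase y₀))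
      (Function.update d x₀ (d x₀ - 1)) (Function.update c y₀ (c y₀ - 1)) B) :
    IsDegreeFactor X N d c (Function.update B x₀ (insert y₀ (B x₀))) := by
  have hB₀ : B x₀ ⊆ (N x₀).erase y₀ := by simpa using h.subset x₀ hx₀
  refine ⟨fun x hx => ?_, fun x hx => ?_, fun y => ?_⟩
  · rcases eq_or_ne x x₀ with rfl | hx
    · simpa using insert_subset hy₀ (hB₀.trans (erase_subset _ _))
    · simpa [hx] using h.subset x ‹_›
  · rcases eq_or_ne x x₀ with rfl | hx
    · have := h.card_eq x hx₀
      rw [Function.update_self, card_insert_of_notMem fun hy => (notMem_erase y₀ _) (hB₀ hy)]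
      simp only [Function.update_self] at this
      omega
    · simpa [hx] using h.card_eq x ‹_›
  · have hle := degIn_le_degIn_add_ite (S := X) (y := y)
      (B := Function.update B x₀ (insert y₀ (B x₀))) (B' := B) (x₀ := x₀) (y₀ := y₀)
      (fun x _ hx => by rw [Function.update_of_ne hx]) (by rw [Function.update_self])
    have := h.degIn_le y
    rcases eq_or_ne y y₀ with rfl | hy
    · simp only [Function.update_self, if_true] at this hle
      omega
    · simp only [Function.update_of_ne hy, hy, if_false] at this hle
      omega

variable [Fintype β]

lemma DegreeHallCondition.residual (hH : DegreeHallCondition X N d c) {S : Finset α}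
    (hSX : S ⊆ X) {B : α → Finset β} (hB : IsDegreeFactor S N d c B)
    (htight : ∑ x ∈ S, d x = ∑ y, min (c y) (degIn S N y)) :
    DegreeHallCondition (X \ S) N d (fun y => c y - degIn S B y) := by
  have hle : ∀ y ∈ univ, degIn S B y ≤ min (c y) (degIn S N y) :=
    fun y _ => le_min (hB.degIn_le y) (degIn_mono hB.subset)
  have hsum : ∑ y, degIn S B y = ∑ x ∈ S, d x := by
    rw [sum_degIn]; exact sum_congr rfl hB.card_eq
  have heq := (sum_eq_sum_iff_of_le hle).1 (hsum.trans htight)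
  intro T hT
  show ∑ x ∈ T, d x ≤ ∑ y, min (c y - degIn S B y) (degIn T N y)
  have hTS : Disjoint T S := (subset_sdiff.1 hT).2
  have key : ∀ y ∈ univ, min (c y) (degIn (T ∪ S) N y) =
      min (c y - degIn S B y) (degIn T N y) + degIn S B y := by
    intro y hy
    rw [degIn_union hTS, heq y hy]
    omega
  have := hH (T ∪ S) (union_subset (hT.trans sdiff_subset) hSX)
  rw [sum_union hTS, sum_congr rfl key, sum_add_distrib, hsum] at this
  omega

lemma DegreeHallCondition.update (hH : DegreeHallCondition X N d c) {x₀ : α} (y₀ : β)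
    (hd : 0 < d x₀) (hstrict : ∀ S ⊆ X, x₀ ∉ S → 0 < ∑ x ∈ S, d x →
      ∑ x ∈ S, d x < ∑ y, min (c y) (degIn S N y)) :
    DegreeHallCondition X (Function.update N x₀ ((N x₀).erase y₀))
      (Function.update d x₀ (d x₀ - 1)) (Function.update c y₀ (c y₀ - 1)) := by
  set N' := Function.update N x₀ ((N x₀).erase y₀)
  set c' := Function.update c y₀ (c y₀ - 1)
  intro S hS
  have hloss : ∑ y, min (c y) (degIn S N y) ≤ ∑ y, min (c' y) (degIn S N' y) + 1 := by
    calc _ ≤ ∑ y, (min (c' y) (degIn S N' y) + if y = y₀ then 1 else 0) :=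
          sum_le_sum fun y _ => ?_
      _ = _ := by rw [sum_add_distrib, sum_ite_eq']; simp
    have := degIn_le_degIn_add_ite (S := S) (y := y) (B := N) (B' := N') (x₀ := x₀) (y₀ := y₀)
      (fun x _ hx => by simp [N', hx]) (by simp [N', subset_insert_iff])
    rcases eq_or_ne y y₀ with rfl | hy
    · simp only [c', Function.update_self, if_true] at this ⊢
      omega
    · simp only [c', Function.update_of_ne hy, hy, if_false] at this ⊢
      omega
  by_cases hx₀S : x₀ ∈ S
  · have := sum_update_of_mem hx₀S d (d x₀ - 1)
    have := sum_eq_add_sum_sdiff_singleton_of_mem hx₀S d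
    have := hH S hS
    omega
  · have : ∑ x ∈ S, Function.update d x₀ (d x₀ - 1) x = ∑ x ∈ S, d x :=
      sum_congr rfl fun x hx => Function.update_of_ne (ne_of_mem_of_not_mem hx hx₀S) _ _
    rcases Nat.eq_zero_or_pos (∑ x ∈ S, d x) with h0 | hpos
    · omega
    · have := hstrict S hS hx₀S hpos
      omega

theorem DegreeHallCondition.exists_isDegreeFactor (hH : DegreeHallCondition X N d c) :
    ∃ B, IsDegreeFactor X N d c B := by
  obtain ⟨n, hn⟩ : ∃ n, ∑ x ∈ X, d x = n := ⟨_, rfl⟩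
  induction n using Nat.strong_induction_on generalizing X N d c with
  | _ n ih =>
  rcases Nat.eq_zero_or_pos n with rfl | hpos
  · refine ⟨fun _ => ∅, fun _ _ => empty_subset _, fun x hx => ?_, fun y => by simp [degIn]⟩
    simpa using (sum_eq_zero_iff.1 hn x hx).symm
  by_cases htight : ∃ S ⊆ X, 0 < ∑ x ∈ S, d x ∧ ∑ x ∈ S, d x < n ∧
      ∑ x ∈ S, d x = ∑ y, min (c y) (degIn S N y)
  · obtain ⟨S, hSX, hS0, hSn, hS⟩ := htight
    obtain ⟨B₁, hB₁⟩ := ih _ hSn (fun T hT => hH T (hT.trans hSX)) rfl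
    have hsplit := sum_sdiff hSX (f := d)
    obtain ⟨B₂, hB₂⟩ := ih _ (by omega) (hH.residual hSX hB₁ hS) rfl
    refine ⟨S.piecewise B₁ B₂, ?_⟩
    simpa [union_sdiff_of_subset hSX] using hB₁.piecewise hB₂ disjoint_sdiff
  push Not at htight
  obtain ⟨x₀, hx₀, hd⟩ : ∃ x ∈ X, 0 < d x := by
    by_contra! h
    rw [sum_eq_zero fun x hx => Nat.le_zero.1 (h x hx)] at hn
    omega
  obtain ⟨y₀, hc, hy₀⟩ : ∃ y, 0 < c y ∧ y ∈ N x₀ := by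
    have := hH {x₀} (singleton_subset_iff.2 hx₀)
    rw [sum_singleton] at this
    obtain ⟨y, -, hy⟩ :=
      exists_ne_zero_of_sum_ne_zero (by omega : ∑ y, min (c y) (degIn {x₀} N y) ≠ 0)
    refine ⟨y, by omega, ?_⟩
    by_contra hy₀
    simp [degIn, hy₀] at hy
  have hstrict : ∀ S ⊆ X, x₀ ∉ S → 0 < ∑ x ∈ S, d x →
      ∑ x ∈ S, d x < ∑ y, min (c y) (degIn S N y) := by
    intro S hS hx₀S hpos
    have : ∑ x ∈ insert x₀ S, d x ≤ n := hn ▸ sum_le_sum_of_subset (insert_subset hx₀ hS)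
    rw [sum_insert hx₀S] at this
    exact (hH S hS).lt_of_ne (htight S hS hpos (by omega))
  have := sum_update_of_mem hx₀ d (d x₀ - 1)
  have := sum_eq_add_sum_sdiff_singleton_of_mem hx₀ d
  obtain ⟨B, hB⟩ := ih (n - 1) (by omega) (hH.update y₀ hd hstrict) (by omega)
  exact ⟨_, hB.of_update hx₀ hd hy₀ hc⟩

end DegreeFactor

theorem degreeHallCondition_const [Fintype β] {X : Finset α} {N : α → Finset β} {k : ℕ}
    (hXk : k ≤ #X)
    (h : ∀ S ⊆ X, k ≤ #S → #S ≤ #({y | k ≤ degIn S N y} : Finset β)) :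
    DegreeHallCondition X N (fun _ => k) (fun _ => k) := by
  have hsum : ∀ (S : Finset α) (T : Finset β) (m : ℕ), (∀ y ∈ T, m ≤ min k (degIn S N y)) →
      #T * m ≤ ∑ y, min k (degIn S N y) := fun S T m hT =>
    calc #T * m = ∑ _ ∈ T, m := by rw [sum_const, smul_eq_mul]
      _ ≤ ∑ y ∈ T, min k (degIn S N y) := sum_le_sum hT
      _ ≤ _ := sum_le_sum_of_subset (subset_univ T)
  intro S hSX
  rw [sum_const, smul_eq_mul]
  rcases le_or_gt k #S with hkS | hSk
  · exact (Nat.mul_le_mul_right k (h S hSX hkS)).trans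
      (hsum S _ k fun y hy => le_min le_rfl (mem_filter.1 hy).2)
  obtain ⟨S', hSS', hS'X, hS'⟩ := exists_subsuperset_card_eq hSX hSk.le hXk
  refine (Nat.mul_comm _ _ ▸ Nat.mul_le_mul_right #S (hS' ▸ h S' hS'X hS'.ge)).trans
    (hsum S _ _ fun y hy => ?_)
  have hall : ∀ x ∈ S', y ∈ N x := card_filter_eq_iff.1
    (le_antisymm (card_filter_le _ _) (hS' ▸ (mem_filter.1 hy).2))
  have : degIn S N y = #S := card_filter_eq_iff.2 fun x hx => hall x (hSS' hx)
  omega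

section Decomposition

variable [Fintype α] {B : α → Finset β} {j : ℕ}

lemma card_le_card_biUnion (hj : 0 < j) (hB : ∀ x, #(B x) = j) (hdeg : ∀ y, degIn univ B y ≤ j)
    (A : Finset α) : #A ≤ #(A.biUnion B) := by
  refine Nat.le_of_mul_le_mul_right (card_mul_le_card_mul (fun x y => y ∈ B x) (m := j) (n := j)
    (fun x hx => ?_) (fun y _ => ?_)) hj
  · rw [bipartiteAbove, filter_mem_eq_inter, inter_eq_right.2 (subset_biUnion_of_mem B hx), hB]
  · exact (card_le_card (filter_subset_filter _ (subset_univ A))).trans (hdeg y)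

variable [Fintype β]

lemma card_add_le_card_biUnion_union (hj : 0 < j) (hB : ∀ x, #(B x) = j)
    (hdeg : ∀ y, degIn univ B y ≤ j) (A : Finset α) :
    #A + (Fintype.card β - Fintype.card α) ≤
      #(A.biUnion B ∪ ({y | degIn univ B y < j} : Finset β)) := by
  set C := (A.biUnion B ∪ ({y | degIn univ B y < j} : Finset β))ᶜ
  -- every `y ∈ C` has all its `j` neighbours outside `A`
  have hC : #C * j ≤ #Aᶜ * j := by
    refine card_mul_le_card_mul (fun y x => y ∈ B x) (fun y hy => ?_) (fun x _ => ?_)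
    · simp only [C, mem_compl, mem_union, mem_biUnion, mem_filter, mem_univ, true_and,
        not_or, not_exists, not_and, not_lt] at hy
      refine hy.2.trans (card_le_card fun x hx => ?_)
      simp only [mem_filter, mem_univ, true_and] at hx
      exact mem_filter.2 ⟨mem_compl.2 fun hxA => hy.1 x hxA hx, hx⟩
    · exact (card_le_card (filter_subset_filter _ (subset_univ C))).trans
        ((card_le_card fun y hy => (mem_filter.1 hy).2).trans (hB x).le)
  have := Nat.le_of_mul_le_mul_right hC hj
  have := (card_le_card_biUnion hj hB hdeg univ).trans (card_le_univ _)
  rw [card_compl, card_compl, card_univ] at *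
  have := card_le_univ A
  have := card_le_univ (A.biUnion B ∪ ({y | degIn univ B y < j} : Finset β))
  omega

theorem exists_injective_covering_maxDegree (hj : 0 < j) (hB : ∀ x, #(B x) = j)
    (hdeg : ∀ y, degIn univ B y ≤ j) :
    ∃ f : α → β, (∀ x, f x ∈ B x) ∧ Function.Injective f ∧
      ∀ y, degIn univ B y = j → y ∈ Set.range f := by
  set F : Finset β := {y | degIn univ B y < j}
  set m := Fintype.card β - Fintype.card α
  -- `m` dummy vertices that may only use `F`: an injection from `α ⊕ Fin m` into `β` is onto,
  -- so every vertex of degree `j` is hit from `α`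
  let t : α ⊕ Fin m → Finset β := Sum.elim B fun _ => F
  have hall : ∀ s : Finset (α ⊕ Fin m), #s ≤ #(s.biUnion t) := by
    intro s
    have hW : s.toLeft.biUnion B ⊆ s.biUnion t := fun y hy => by
      obtain ⟨x, hx, hy⟩ := mem_biUnion.1 hy
      exact mem_biUnion.2 ⟨.inl x, mem_toLeft.1 hx, hy⟩
    rw [← card_toLeft_add_card_toRight]
    rcases s.toRight.eq_empty_or_nonempty with h | ⟨i, hi⟩
    · rw [h, card_empty, add_zero]
      exact (card_le_card_biUnion hj hB hdeg _).trans (card_le_card hW)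
    · have hF : F ⊆ s.biUnion t := fun y hy => mem_biUnion.2 ⟨.inr i, mem_toRight.1 hi, hy⟩
      calc #s.toLeft + #s.toRight ≤ #s.toLeft + m := by
            gcongr; exact (card_le_univ _).trans_eq (Fintype.card_fin m)
        _ ≤ _ := card_add_le_card_biUnion_union hj hB hdeg _
        _ ≤ _ := card_le_card (union_subset hW hF)
  obtain ⟨g, hg, hgt⟩ := (all_card_le_biUnion_card_iff_exists_injective t).1 hall
  have hcard : Fintype.card (α ⊕ Fin m) = Fintype.card β := by
    have := (card_le_card_biUnion hj hB hdeg univ).trans (card_le_univ _)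
    rw [card_univ] at this
    simp only [Fintype.card_sum, Fintype.card_fin, m]
    omega
  have hgbij := (Fintype.bijective_iff_injective_and_card g).2 ⟨hg, hcard⟩
  refine ⟨g ∘ Sum.inl, fun x => hgt (.inl x), hg.comp Sum.inl_injective, fun y hy => ?_⟩
  obtain ⟨i | i, rfl⟩ := hgbij.2 y
  · exact ⟨i, rfl⟩
  · have := hgt (.inr i)
    simp only [t, F, Sum.elim_inr, mem_filter, mem_univ, true_and] at this
    omega

theorem exists_injective_selections (hB : ∀ x, #(B x) = j) (hdeg : ∀ y, degIn univ B y ≤ j) :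
    ∃ F : Fin j → α → β, (∀ i x, F i x ∈ B x) ∧ (∀ i, Function.Injective (F i)) ∧
      ∀ x, Function.Injective fun i => F i x := by
  induction j generalizing B with
  | zero => exact ⟨fun i => i.elim0, fun i => i.elim0, fun i => i.elim0, fun _ i => i.elim0⟩
  | succ j ih =>
    obtain ⟨f, hfB, hf, hfull⟩ := exists_injective_covering_maxDegree j.succ_pos hB hdeg
    have hcard : ∀ x, #((B x).erase (f x)) = j := fun x => by
      rw [card_erase_of_mem (hfB x), hB x, Nat.add_sub_cancel]
    have hdeg' : ∀ y, degIn univ (fun x => (B x).erase (f x)) y ≤ j := by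
      intro y
      have hle : degIn univ (fun x => (B x).erase (f x)) y ≤ degIn univ B y :=
        degIn_mono fun x _ => erase_subset _ _
      rcases (hdeg y).lt_or_eq with hlt | heq
      · omega
      · obtain ⟨x, rfl⟩ := hfull _ heq
        have : degIn univ (fun x => (B x).erase (f x)) (f x) < degIn univ B (f x) :=
          card_lt_card <| (ssubset_iff_of_subset fun x' hx' => mem_filter.2
            ⟨(mem_filter.1 hx').1, mem_of_mem_erase (mem_filter.1 hx').2⟩).2
            ⟨x, by simp [hfB x], by simp⟩
        omega
    obtain ⟨F, hFB, hFrow, hFcol⟩ := ih hcard hdeg'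
    refine ⟨fun i x => (Fin.cons (f x) (F · x) : Fin (j + 1) → β) i, fun i x => ?_, fun i => ?_,
      fun x => ?_⟩
    · cases i using Fin.cases with
      | zero => simpa using hfB x
      | succ i => simpa using mem_of_mem_erase (hFB i x)
    · cases i using Fin.cases with
      | zero => simpa using hf
      | succ i => simpa using hFrow i
    · refine Fin.cons_injective_iff.2 ⟨?_, hFcol x⟩
      rintro ⟨i, hi⟩
      exact notMem_erase (f x) (B x) (hi ▸ hFB i x)

end Decomposition

section BindingNumber

variable [Fintype V] {G : SimpleGraph V} {k : ℕ} {X S : Finset V}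

lemma bipBindingNum_le (hSX : S ⊆ X) (hkS : k ≤ #S) :
    bipBindingNum G k X ≤ #(kNbhd G k S) / #S := by
  have hmem : S ∈ X.powerset.filter fun S => k ≤ #S := mem_filter.2 ⟨mem_powerset.2 hSX, hkS⟩
  rw [bipBindingNum, dif_pos ⟨S, hmem⟩]
  exact inf'_le _ hmem

lemma le_card_of_bipBindingNum_pos (h : 0 < bipBindingNum G k X) : k ≤ #X := by
  rw [bipBindingNum] at h
  split_ifs at h with hne
  · obtain ⟨S, hS⟩ := hne
    rw [mem_filter, mem_powerset] at hS
    exact hS.2.trans (card_le_card hS.1)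
  · exact absurd h (lt_irrefl 0)

lemma card_le_card_kNbhd (hk : 0 < k) (h : 1 ≤ bipBindingNum G k X) (hSX : S ⊆ X)
    (hkS : k ≤ #S) : #S ≤ #(kNbhd G k S) := by
  have := h.trans (bipBindingNum_le hSX hkS)
  rwa [one_le_div (by exact_mod_cast hk.trans_le hkS), Nat.cast_le] at this

lemma kNbhd_eq_filter_degIn (G : SimpleGraph V) (k : ℕ) (S : Finset V) :
    kNbhd G k S = ({y | k ≤ degIn S (fun x => G.neighborFinset x) y} : Finset V) := by
  ext y
  simp [kNbhd, degIn, G.adj_comm]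

end BindingNumber

lemma SimpleGraph.Subgraph.isMatching_iSup_subgraphOfAdj {G : SimpleGraph V} {X : Set V}
    {g : X → V} (hadj : ∀ x : X, G.Adj x (g x)) (hg : Function.Injective g)
    (hout : ∀ x : X, g x ∉ X) :
    (⨆ x, G.subgraphOfAdj (hadj x)).IsMatching := by
  refine IsMatching.iSup (fun x => IsMatching.subgraphOfAdj (hadj x)) fun x x' hxx' => ?_
  simp only [support_subgraphOfAdj, Set.disjoint_insert_right, Set.mem_insert_iff,
    Set.mem_singleton_iff, not_or, Set.disjoint_singleton_right]
  exact ⟨⟨fun h => hxx' (SetCoe.ext h).symm, ne_of_mem_of_not_mem x'.2 (hout x)⟩,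
    (ne_of_mem_of_not_mem x.2 (hout x')).symm, (hg.ne hxx').symm⟩

theorem stmt_16 [Fintype V] (k : ℕ) (hk : 1 ≤ k) (G : SimpleGraph V)
    (X : Finset V) (hbip : ∀ u v : V, G.Adj u v → (u ∈ X ↔ v ∉ X))
    (hβ : 1 ≤ bipBindingNum G k X) :
    ∃ M : Fin k → G.Subgraph,
      (∀ i, (M i).IsMatching ∧ (↑X : Set V) ⊆ (M i).verts) ∧
      ∀ i j, i ≠ j → Disjoint (M i).edgeSet (M j).edgeSet := by
  have hXk := le_card_of_bipBindingNum_pos (zero_lt_one.trans_le hβ)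
  obtain ⟨B, hB⟩ := (degreeHallCondition_const hXk fun S hSX hkS =>
    kNbhd_eq_filter_degIn G k S ▸ card_le_card_kNbhd hk hβ hSX hkS).exists_isDegreeFactor
  obtain ⟨F, hFB, hFrow, hFcol⟩ := exists_injective_selections (B := fun x : X => B x)
    (fun x => hB.card_eq x x.2) fun y => degIn_univ_subtype.trans_le (hB.degIn_le y)
  have hadj : ∀ i (x : X), G.Adj x (F i x) := fun i x => by
    simpa using hB.subset x x.2 (hFB i x)
  have hout : ∀ i (x : X), F i x ∉ X := fun i x => (hbip _ _ (hadj i x)).1 x.2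
  refine ⟨fun i => ⨆ x : X, G.subgraphOfAdj (hadj i x), fun i => ⟨?_, ?_⟩, fun i j hij => ?_⟩
  · exact SimpleGraph.Subgraph.isMatching_iSup_subgraphOfAdj (X := (X : Set V)) _ (hFrow i)
      (hout i)
  · intro x hx
    simp only [SimpleGraph.Subgraph.verts_iSup, SimpleGraph.subgraphOfAdj_verts, Set.mem_iUnion]
    exact ⟨⟨x, hx⟩, Set.mem_insert _ _⟩
  · simp only [SimpleGraph.Subgraph.edgeSet_iSup, SimpleGraph.edgeSet_subgraphOfAdj,
      Set.disjoint_iUnion_left, Set.disjoint_iUnion_right, Set.disjoint_singleton_left,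
      Set.mem_singleton_iff]
    intro x x' he
    rcases Sym2.eq_iff.1 he with ⟨hx, hF⟩ | ⟨hx, -⟩
    · exact hij (hFcol x (by simpa [Subtype.ext hx] using hF))
    · exact hout j x (hx ▸ x'.2)
end

section
/- Let k ≥ 2 be an integer and G a split graph with split partition (X, Y), where X is an independent set and Y is a clique. If β^k(G) ≥ 1, then |Y| ≥ max{k, |X| + k − 1}. -/
open Finset
open scoped Classical

variable {V : Type*}

/-!
For `T ⊆ Y` with `|T| < k`, a vertex of the independent set `X` has all its neighbours in
`X ∪ T` inside `T`, so it misses `Λ^k(X ∪ T)`. Hence, when `X ≠ ∅`, `Λ^k(X ∪ T)` is a proper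
subset of `Y`, and `β^k(G) ≥ 1` gives `|X| + |T| ≤ |Y|` as soon as `|X| + |T| ≥ k`.
Taking `T = Y` forces `|Y| ≥ k`; then a `T` of size `k - 1` gives `|Y| ≥ |X| + k - 1`.
-/

section BindingNumber

variable [Fintype V] {G : SimpleGraph V} {k : ℕ}

theorem le_card_of_one_le_bindingNum (hβ : 1 ≤ bindingNum G k) : k ≤ Fintype.card V := by
  rw [bindingNum] at hβ
  split_ifs at hβ with h
  · obtain ⟨S, hS⟩ := h
    exact (mem_filter.1 hS).2.1.trans (card_le_univ S)
  · norm_num at hβ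

theorem card_le_card_kNbhd_of_one_le_bindingNum (hβ : 1 ≤ bindingNum G k) {S : Finset V}
    (hS : k ≤ S.card) (hΛ : kNbhd G k S ≠ univ) : S.card ≤ (kNbhd G k S).card := by
  have hmem : S ∈ univ.filter fun S : Finset V => k ≤ S.card ∧ kNbhd G k S ≠ univ := by
    simp [hS, hΛ]
  rw [bindingNum, dif_pos ⟨S, hmem⟩] at hβ
  rcases one_le_div_iff.1 (hβ.trans (inf'_le _ hmem)) with ⟨-, h⟩ | ⟨h, -⟩
  · exact_mod_cast h
  · exact absurd h (Nat.cast_nonneg _).not_gt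

theorem disjoint_kNbhd_union_of_card_lt {X T : Finset V}
    (hX : ∀ u ∈ X, ∀ v ∈ X, ¬ G.Adj u v) (hT : T.card < k) :
    Disjoint X (kNbhd G k (X ∪ T)) := by
  rw [disjoint_left]
  intro v hv
  simp only [kNbhd, mem_filter, mem_univ, true_and, not_le]
  refine lt_of_le_of_lt (card_le_card fun u hu => ?_) hT
  rw [mem_filter, mem_union] at hu
  exact hu.1.resolve_left fun huX => hX v hv u huX hu.2

theorem card_add_card_le_of_one_le_bindingNum (hβ : 1 ≤ bindingNum G k) {X Y T : Finset V}
    (hdisj : Disjoint X Y) (hunion : X ∪ Y = univ) (hX : ∀ u ∈ X, ∀ v ∈ X, ¬ G.Adj u v)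
    (hXne : X.Nonempty) (hTY : T ⊆ Y) (hT : T.card < k) (hk : k ≤ X.card + T.card) :
    X.card + T.card ≤ Y.card := by
  have hΛX := disjoint_kNbhd_union_of_card_lt hX hT
  obtain ⟨x, hx⟩ := hXne
  have hΛ : kNbhd G k (X ∪ T) ≠ univ := fun h => disjoint_left.1 hΛX hx (h ▸ mem_univ x)
  have hXT : (X ∪ T).card = X.card + T.card := card_union_of_disjoint (hdisj.mono_right hTY)
  calc X.card + T.card = (X ∪ T).card := hXT.symm
    _ ≤ (kNbhd G k (X ∪ T)).card :=
      card_le_card_kNbhd_of_one_le_bindingNum hβ (hXT ▸ hk) hΛ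
    _ ≤ Y.card :=
      card_le_card (hΛX.symm.left_le_of_le_sup_left ((subset_univ _).trans hunion.ge))

end BindingNumber

theorem stmt_19_general [Fintype V] (k : ℕ) (hk : 2 ≤ k) (G : SimpleGraph V)
    (X Y : Finset V) (hdisj : Disjoint X Y) (hunion : X ∪ Y = Finset.univ)
    (hX : ∀ u ∈ X, ∀ v ∈ X, ¬ G.Adj u v)
    (hβ : 1 ≤ bindingNum G k) :
    max k (X.card + k - 1) ≤ Y.card := by
  have hV := le_card_of_one_le_bindingNum hβ
  rcases X.eq_empty_or_nonempty with rfl | hXne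
  · rw [empty_union] at hunion
    simpa [hunion] using hV
  have hXpos := hXne.card_pos
  have hYk : k ≤ Y.card := by
    by_contra! hYk
    have hXY := card_add_card_le_of_one_le_bindingNum hβ hdisj hunion hX hXne subset_rfl hYk
      (by rw [← card_union_of_disjoint hdisj, hunion, card_univ]; exact hV)
    omega
  obtain ⟨T, hTY, hT⟩ := exists_subset_card_eq (show k - 1 ≤ Y.card by omega)
  have hXT := card_add_card_le_of_one_le_bindingNum hβ hdisj hunion hX hXne hTY (by omega) (by omega)
  omega

theorem stmt_19 [Fintype V] (k : ℕ) (hk : 2 ≤ k) (G : SimpleGraph V)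
    (X Y : Finset V) (hdisj : Disjoint X Y) (hunion : X ∪ Y = Finset.univ)
    (hX : ∀ u ∈ X, ∀ v ∈ X, ¬ G.Adj u v)
    (hY : ∀ u ∈ Y, ∀ v ∈ Y, u ≠ v → G.Adj u v)
    (hβ : 1 ≤ bindingNum G k) :
    max k (X.card + k - 1) ≤ Y.card :=
  stmt_19_general k hk G X Y hdisj hunion hX hβ
end
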